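/- Let n ≥ 1 and let u : Fin n → Fin n → ℝ → ℝ be functions each differentiable on ℝ. For q : Fin n → ℝ define the Stäckel matrix M(q) ∈ Matrix (Fin n) (Fin n) ℝ by M(q) i j = u i j (q i) (the i-th row depends only on q i). For (q, p) ∈ (Fin n → ℝ) × (Fin n → ℝ) with M(q) invertible, define α_j (q, p) = (1/2) * ∑ k, (M(q)⁻¹) j k * (p k)^2 for each j : Fin n. Then the functions α_j pairwise Poisson-commute: for all j, l : Fin n and every (q, p) with det M(q) ≠ 0, ∑ i, ((∂α_j/∂p_i)(∂α_l/∂q_i) - (∂α_j/∂q_i)(∂α_l/∂p_i)) = 0 at (q, p), where each partial derivative is the derivative of the corresponding one-variable slice. -/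

import Mathlib

/-- The Stäckel matrix associated with functions `u i j : ℝ → ℝ`: its `i`-th row depends only
on the `i`-th coordinate `q i`. -/
def staeckelMatrix (n : ℕ) (u : Fin n → Fin n → ℝ → ℝ) (q : Fin n → ℝ) :
    Matrix (Fin n) (Fin n) ℝ :=
  fun i j => u i j (q i)

/-- The Stäckel first integrals `α_j (q, p) = (1/2) ∑ k (M(q)⁻¹)_{j k} p_k²`. -/
noncomputable def staeckelAlpha (n : ℕ) (u : Fin n → Fin n → ℝ → ℝ) (j : Fin n)
    (q p : Fin n → ℝ) : ℝ :=
  (1 / 2) * ∑ k, (staeckelMatrix n u q)⁻¹ j k * (p k) ^ 2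

/-!
Since `∂α_j/∂p_i = (M⁻¹)_{ji} p_i` and only the `i`-th row of `M` depends on `q_i`, the derivative
`∂_{q_i} M⁻¹ = -M⁻¹ (∂_{q_i} M) M⁻¹` has `j`-th row `(M⁻¹)_{ji} • v` with `v` independent of `j`.
Hence `∂α_j/∂q_i = (M⁻¹)_{ji} C_i` with `C_i` independent of `j`, and the `i`-th term of
`{α_j, α_l}` is `(M⁻¹)_{ji} (M⁻¹)_{li} (p_i C_i - C_i p_i) = 0`.
-/

open Matrix

section

variable {m : Type*} [Fintype m] [DecidableEq m]

/- Matrices carry no global norm; the `L∞` operator norm makes them a complete normed algebra,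
where the derivative of `Ring.inverse` is available. -/
attribute [local instance] Matrix.linftyOpNormedRing Matrix.linftyOpNormedAlgebra

theorem Matrix.hasDerivAt_of_hasDerivAt_apply {A : ℝ → Matrix m m ℝ} {A' : Matrix m m ℝ} {t₀ : ℝ}
    (hA : ∀ a b, HasDerivAt (fun t => A t a b) (A' a b) t₀) : HasDerivAt A A' t₀ := by
  have h := HasDerivAt.fun_sum fun a (_ : a ∈ Finset.univ) => HasDerivAt.fun_sum
    fun b (_ : b ∈ Finset.univ) => (hA a b).smul_const (single a b (1 : ℝ))
  simp only [smul_single, smul_eq_mul, mul_one, ← matrix_eq_sum_single] at h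
  exact h

theorem Matrix.hasDerivAt_inv_apply {A : ℝ → Matrix m m ℝ} {A' : Matrix m m ℝ} {t₀ : ℝ}
    (hA : ∀ a b, HasDerivAt (fun t => A t a b) (A' a b) t₀) (hdet : (A t₀).det ≠ 0) (c k : m) :
    HasDerivAt (fun t => (A t)⁻¹ c k) (-((A t₀)⁻¹ * A' * (A t₀)⁻¹) c k) t₀ := by
  obtain ⟨x, hx⟩ : IsUnit (A t₀) := (isUnit_iff_isUnit_det _).2 (isUnit_iff_ne_zero.2 hdet)
  have hring := hasFDerivAt_ringInverse (𝕜 := ℝ) x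
  rw [hx] at hring
  have hinv := hring.comp_hasDerivAt t₀ (hasDerivAt_of_hasDerivAt_apply hA)
  have hentry :=
    (entryLinearMap ℝ ℝ c k).toContinuousLinearMap.hasFDerivAt.comp_hasDerivAt t₀ hinv
  have hxinv : (↑x⁻¹ : Matrix m m ℝ) = (A t₀)⁻¹ := by rw [← hx, coe_units_inv]
  simp only [Function.comp_def, ← nonsing_inv_eq_ringInverse, hxinv] at hentry
  exact hentry

end

theorem hasDerivAt_half_sum_mul_sq_update {ι : Type*} [Fintype ι] [DecidableEq ι]
    (c p : ι → ℝ) (i : ι) :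
    HasDerivAt (fun t => (1 / 2) * ∑ k, c k * Function.update p i t k ^ 2) (c i * p i) (p i) := by
  have h := (HasDerivAt.fun_sum fun k (_ : k ∈ Finset.univ) =>
    ((hasDerivAt_pi.1 (hasDerivAt_update p i (p i)) k).fun_pow 2).const_mul (c k)).const_mul
      (1 / 2 : ℝ)
  refine h.congr_deriv ?_
  simp only [Function.update_eq_self, Pi.single_apply, mul_ite, mul_one, mul_zero,
    Finset.sum_ite_eq', Finset.mem_univ, if_true]
  ring

section Staeckel

variable {n : ℕ} (u : Fin n → Fin n → ℝ → ℝ) (q p : Fin n → ℝ) (i : Fin n)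

theorem hasDerivAt_staeckelMatrix_update_apply (hu : ∀ b, DifferentiableAt ℝ (u i b) (q i))
    (a b : Fin n) :
    HasDerivAt (fun t => staeckelMatrix n u (Function.update q i t) a b)
      (vecMulVec (Pi.single i 1) (fun b => deriv (u i b) (q i)) a b) (q i) := by
  rcases eq_or_ne a i with rfl | ha
  · simpa [staeckelMatrix, vecMulVec_apply] using (hu b).hasDerivAt
  · simpa [staeckelMatrix, vecMulVec_apply, ha] using hasDerivAt_const (q i) (u a b (q a))

theorem hasDerivAt_staeckelMatrix_inv_update_apply (hu : ∀ b, DifferentiableAt ℝ (u i b) (q i))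
    (hdet : (staeckelMatrix n u q).det ≠ 0) (j k : Fin n) :
    HasDerivAt (fun t => (staeckelMatrix n u (Function.update q i t))⁻¹ j k)
      (-((staeckelMatrix n u q)⁻¹ j i *
        ((fun b => deriv (u i b) (q i)) ᵥ* (staeckelMatrix n u q)⁻¹) k)) (q i) := by
  have h := Matrix.hasDerivAt_inv_apply (hasDerivAt_staeckelMatrix_update_apply u q i hu)
    (by simpa using hdet) j k
  simpa [mul_vecMulVec, vecMulVec_mul, vecMulVec_apply] using h

theorem hasDerivAt_staeckelAlpha_momentum (j : Fin n) :
    HasDerivAt (fun t => staeckelAlpha n u j q (Function.update p i t))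
      ((staeckelMatrix n u q)⁻¹ j i * p i) (p i) :=
  hasDerivAt_half_sum_mul_sq_update _ p i

theorem hasDerivAt_staeckelAlpha_position (hu : ∀ b, DifferentiableAt ℝ (u i b) (q i))
    (hdet : (staeckelMatrix n u q).det ≠ 0) (j : Fin n) :
    HasDerivAt (fun t => staeckelAlpha n u j (Function.update q i t) p)
      ((staeckelMatrix n u q)⁻¹ j i * (-(1 / 2) * ∑ k,
        ((fun b => deriv (u i b) (q i)) ᵥ* (staeckelMatrix n u q)⁻¹) k * p k ^ 2)) (q i) := by
  have h := (HasDerivAt.fun_sum fun k (_ : k ∈ Finset.univ) =>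
    (hasDerivAt_staeckelMatrix_inv_update_apply u q i hu hdet j k).mul_const (p k ^ 2)).const_mul
      (1 / 2 : ℝ)
  refine h.congr_deriv ?_
  simp only [neg_mul, Finset.sum_neg_distrib, mul_assoc, ← Finset.mul_sum]
  ring

end Staeckel

theorem staeckel_integrals_commute_general (n : ℕ) (u : Fin n → Fin n → ℝ → ℝ)
    (hu : ∀ i j, Differentiable ℝ (u i j))
    (j l : Fin n) (q p : Fin n → ℝ) (hdet : (staeckelMatrix n u q).det ≠ 0) :
    ∑ i, (deriv (fun t => staeckelAlpha n u j q (Function.update p i t)) (p i) *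
          deriv (fun t => staeckelAlpha n u l (Function.update q i t) p) (q i)
        - deriv (fun t => staeckelAlpha n u j (Function.update q i t) p) (q i) *
          deriv (fun t => staeckelAlpha n u l q (Function.update p i t)) (p i)) = 0 := by
  refine Finset.sum_eq_zero fun i _ => ?_
  have hui : ∀ b, DifferentiableAt ℝ (u i b) (q i) := fun b => hu i b (q i)
  rw [(hasDerivAt_staeckelAlpha_momentum u q p i j).deriv,
    (hasDerivAt_staeckelAlpha_momentum u q p i l).deriv,
    (hasDerivAt_staeckelAlpha_position u q p i hui hdet j).deriv,
    (hasDerivAt_staeckelAlpha_position u q p i hui hdet l).deriv]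
  ring

/-- **Stäckel's theorem** (commutation of the integrals): the functions
`α_j (q, p) = (1/2) ∑ k (M(q)⁻¹)_{j k} p_k²` pairwise Poisson-commute at every point where
`M(q)` is invertible. -/
theorem staeckel_integrals_commute (n : ℕ) (hn : 1 ≤ n) (u : Fin n → Fin n → ℝ → ℝ)
    (hu : ∀ i j, Differentiable ℝ (u i j))
    (j l : Fin n) (q p : Fin n → ℝ) (hdet : (staeckelMatrix n u q).det ≠ 0) :
    ∑ i, (deriv (fun t => staeckelAlpha n u j q (Function.update p i t)) (p i) *
          deriv (fun t => staeckelAlpha n u l (Function.update q i t) p) (q i)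
        - deriv (fun t => staeckelAlpha n u j (Function.update q i t) p) (q i) *
          deriv (fun t => staeckelAlpha n u l q (Function.update p i t)) (p i)) = 0 :=
  staeckel_integrals_commute_general n u hu j l q p hdet
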